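/- arXiv:2011.01164 — 5 statements merged into one kernel-verified Lean document; each statement's English description precedes it below -/
import Mathlib

section
/- Let h : ℝⁿ → ℝ be continuously differentiable, let f : ℝⁿ → ℝⁿ, u : ℝⁿ → ℝᵐ, and g : ℝⁿ → (ℝᵐ →L ℝⁿ) be continuous, let ψ₁, …, ψ_p : ℝⁿ → ℝⁿ (p ≥ 1) be continuous, and let γ : ℝ → ℝ be a locally Lipschitz extended class-K function. Suppose that for all x ∈ ℝⁿ, ⟪∇h(x), f(x) + g(x)(u(x))⟫ ≥ -γ(h(x)) - min_{1 ≤ i ≤ p} ⟪∇h(x), ψᵢ(x)⟫. Then for every differentiable curve x : [0, t₁] → ℝⁿ satisfying the differential inclusion x′(t) - f(x(t)) - g(x(t))(u(x(t))) ∈ convexHull{ψ₁(x(t)), …, ψ_p(x(t))} for all t ∈ [0, t₁], the condition h(x(0)) ≥ 0 implies h(x(t)) ≥ 0 for all t ∈ [0, t₁]. -/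
open scoped RealInnerProductSpace

/-!
Along a trajectory, `φ = h ∘ x` has derivative `⟪∇h(x), x'⟫`. Split `x'` into the nominal field
`f(x) + g(x) u(x)` and the disturbance; the disturbance lies in the convex hull of the `ψᵢ(x)`, so
its pairing with `∇h(x)` is at least `minᵢ ⟪∇h(x), ψᵢ(x)⟫`, and the RCBF inequality yields
`φ' ≥ -γ(φ)`. As `γ` is increasing with `γ 0 = 0`, `φ' ≥ 0` wherever `φ < 0`; so if `φ` were
negative at some time, it would be nondecreasing from the last earlier time at which `φ ≥ 0`,
a contradiction.
-/

open Set

theorem nonneg_of_hasDerivAt_nonneg_of_neg {φ φ' : ℝ → ℝ} {a b : ℝ}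
    (hcont : ContinuousOn φ (Icc a b)) (hderiv : ∀ t ∈ Ioo a b, HasDerivAt φ (φ' t) t)
    (hφ' : ∀ t ∈ Ioo a b, φ t < 0 → 0 ≤ φ' t) (ha : 0 ≤ φ a) :
    ∀ t ∈ Icc a b, 0 ≤ φ t := by
  intro t ht
  by_contra! ht_neg
  have hcont_t : ContinuousOn φ (Icc a t) := hcont.mono (Icc_subset_Icc_right ht.2)
  obtain ⟨s, ⟨hs_mem, hs_nonneg⟩, hs_last⟩ : ∃ s, IsGreatest (Icc a t ∩ φ ⁻¹' Ici 0) s :=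
    (isCompact_Icc.of_isClosed_subset
      (hcont_t.preimage_isClosed_of_isClosed isClosed_Icc isClosed_Ici)
      inter_subset_left).exists_isGreatest ⟨a, ⟨left_mem_Icc.2 ht.1, ha⟩⟩
  have hmono : MonotoneOn φ (Icc s t) := by
    refine monotoneOn_of_hasDerivWithinAt_nonneg (f' := φ') (convex_Icc s t)
      (hcont_t.mono (Icc_subset_Icc_left hs_mem.1)) (fun r hr => ?_) (fun r hr => ?_)
    all_goals
      rw [interior_Icc] at hr
      have hr_ab : r ∈ Ioo a b := ⟨hs_mem.1.trans_lt hr.1, hr.2.trans_le ht.2⟩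
    · exact (hderiv r hr_ab).hasDerivWithinAt
    · refine hφ' r hr_ab (not_le.1 fun hr_nonneg => hr.1.not_ge ?_)
      exact hs_last ⟨⟨hs_mem.1.trans hr.1.le, hr.2.le⟩, hr_nonneg⟩
  exact ht_neg.not_ge <|
    hs_nonneg.trans (hmono (left_mem_Icc.2 hs_mem.2) (right_mem_Icc.2 hs_mem.2) hs_mem.2)

theorem HasDerivAt.inner_gradient_comp {F : Type*} [NormedAddCommGroup F]
    [InnerProductSpace ℝ F] [CompleteSpace F] {h : F → ℝ} {x : ℝ → F} {x' : F} {t : ℝ}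
    (hx : HasDerivAt x x' t) (hh : DifferentiableAt ℝ h (x t)) :
    HasDerivAt (h ∘ x) ⟪gradient h (x t), x'⟫ t := by
  simpa using hh.hasGradientAt.hasFDerivAt.comp_hasDerivAt t hx

theorem inf'_inner_le_of_mem_convexHull {E ι : Type*} [NormedAddCommGroup E]
    [InnerProductSpace ℝ E] [Fintype ι] (hι : (Finset.univ : Finset ι).Nonempty) (z : ι → E)
    (v : E) {d : E} (hd : d ∈ convexHull ℝ (range z)) :
    Finset.univ.inf' hι (fun i => ⟪v, z i⟫) ≤ ⟪v, d⟫ := by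
  obtain ⟨_, ⟨i, rfl⟩, hi⟩ :=
    ((innerₛₗ ℝ v).concaveOn convex_univ).exists_le_of_mem_convexHull (subset_univ _) hd
  exact (Finset.inf'_le _ (Finset.mem_univ i)).trans hi

theorem rcbf_forward_invariance_general {n m p : ℕ} (hp : 0 < p)
    (h : EuclideanSpace ℝ (Fin n) → ℝ) (hh : ContDiff ℝ 1 h)
    (f : EuclideanSpace ℝ (Fin n) → EuclideanSpace ℝ (Fin n))
    (u : EuclideanSpace ℝ (Fin n) → EuclideanSpace ℝ (Fin m))
    (g : EuclideanSpace ℝ (Fin n) → (EuclideanSpace ℝ (Fin m) →L[ℝ] EuclideanSpace ℝ (Fin n)))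
    (ψ : Fin p → EuclideanSpace ℝ (Fin n) → EuclideanSpace ℝ (Fin n))
    (γ : ℝ → ℝ) (hγmono : StrictMono γ) (hγ0 : γ 0 = 0)
    (hRCBF : ∀ x : EuclideanSpace ℝ (Fin n),
      ⟪gradient h x, f x + g x (u x)⟫ ≥
        -γ (h x) - Finset.univ.inf' ⟨⟨0, hp⟩, Finset.mem_univ _⟩
          (fun i : Fin p => ⟪gradient h x, ψ i x⟫))
    (t₁ : ℝ) (x x' : ℝ → EuclideanSpace ℝ (Fin n))
    (hx : ∀ t ∈ Set.Icc (0 : ℝ) t₁, HasDerivAt x (x' t) t)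
    (hincl : ∀ t ∈ Set.Icc (0 : ℝ) t₁,
      x' t - f (x t) - g (x t) (u (x t)) ∈
        convexHull ℝ (Set.range fun i : Fin p => ψ i (x t)))
    (h0 : h (x 0) ≥ 0) :
    ∀ t ∈ Set.Icc (0 : ℝ) t₁, h (x t) ≥ 0 := by
  have hderiv : ∀ t ∈ Icc 0 t₁, HasDerivAt (h ∘ x) ⟪gradient h (x t), x' t⟫ t :=
    fun t ht => (hx t ht).inner_gradient_comp (hh.differentiable one_ne_zero _)
  refine nonneg_of_hasDerivAt_nonneg_of_neg
    (fun t ht => (hderiv t ht).continuousAt.continuousWithinAt)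
    (fun t ht => hderiv t (Ioo_subset_Icc_self ht)) (fun t ht hneg => ?_) h0
  have hγ_nonpos : γ (h (x t)) ≤ 0 := hγ0 ▸ hγmono.monotone hneg.le
  have hdisturbance := inf'_inner_le_of_mem_convexHull ⟨⟨0, hp⟩, Finset.mem_univ _⟩ _
    (gradient h (x t)) (hincl t (Ioo_subset_Icc_self ht))
  have hsplit : ⟪gradient h (x t), x' t⟫ = ⟪gradient h (x t), f (x t) + g (x t) (u (x t))⟫ +
      ⟪gradient h (x t), x' t - f (x t) - g (x t) (u (x t))⟫ := by
    rw [← inner_add_right]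
    congr 1
    abel
  linarith [hRCBF (x t)]

/-- **Forward invariance under a robust control barrier function (RCBF).**
If `h` is a continuously differentiable RCBF for the disturbed system
`ẋ ∈ f(x) + g(x)u(x) + co{ψ₁(x), …, ψ_p(x)}`, i.e. the robust barrier inequality
holds for all states, then along every differentiable trajectory of the
differential inclusion, `h(x(0)) ≥ 0` implies `h(x(t)) ≥ 0` for all `t ∈ [0, t₁]`. -/
theorem rcbf_forward_invariance {n m p : ℕ} (hp : 0 < p)
    (h : EuclideanSpace ℝ (Fin n) → ℝ) (hh : ContDiff ℝ 1 h)
    (f : EuclideanSpace ℝ (Fin n) → EuclideanSpace ℝ (Fin n)) (hf : Continuous f)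
    (u : EuclideanSpace ℝ (Fin n) → EuclideanSpace ℝ (Fin m)) (hu : Continuous u)
    (g : EuclideanSpace ℝ (Fin n) → (EuclideanSpace ℝ (Fin m) →L[ℝ] EuclideanSpace ℝ (Fin n)))
    (hg : Continuous g)
    (ψ : Fin p → EuclideanSpace ℝ (Fin n) → EuclideanSpace ℝ (Fin n))
    (hψ : ∀ i, Continuous (ψ i))
    (γ : ℝ → ℝ) (hγlip : LocallyLipschitz γ) (hγcont : Continuous γ)
    (hγmono : StrictMono γ) (hγ0 : γ 0 = 0)
    (hRCBF : ∀ x : EuclideanSpace ℝ (Fin n),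
      ⟪gradient h x, f x + g x (u x)⟫ ≥
        -γ (h x) - Finset.univ.inf' ⟨⟨0, hp⟩, Finset.mem_univ _⟩
          (fun i : Fin p => ⟪gradient h x, ψ i x⟫))
    (t₁ : ℝ) (x x' : ℝ → EuclideanSpace ℝ (Fin n))
    (hx : ∀ t ∈ Set.Icc (0 : ℝ) t₁, HasDerivAt x (x' t) t)
    (hincl : ∀ t ∈ Set.Icc (0 : ℝ) t₁,
      x' t - f (x t) - g (x t) (u (x t)) ∈
        convexHull ℝ (Set.range fun i : Fin p => ψ i (x t)))
    (h0 : h (x 0) ≥ 0) :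
    ∀ t ∈ Set.Icc (0 : ℝ) t₁, h (x t) ≥ 0 :=
  rcbf_forward_invariance_general hp h hh f u g ψ γ hγmono hγ0 hRCBF t₁ x x' hx hincl h0
end

section
/- Let h : ℝⁿ → ℝ be continuously differentiable, let f : ℝⁿ → ℝⁿ, u : ℝⁿ → ℝᵐ, and g : ℝⁿ → (ℝᵐ →L ℝⁿ) be continuous, let ψ₁, …, ψ_p : ℝⁿ → ℝⁿ (p ≥ 1) be continuous, and let γ : ℝ → ℝ be a locally Lipschitz extended class-K function. Suppose that for all x ∈ ℝⁿ, ⟪∇h(x), f(x) + g(x)(u(x))⟫ ≥ -γ(h(x)) - min_{1 ≤ i ≤ p} ⟪∇h(x), ψᵢ(x)⟫. Then for every differentiable curve x : [0, ∞) → ℝⁿ satisfying x′(t) - f(x(t)) - g(x(t))(u(x(t))) ∈ convexHull{ψ₁(x(t)), …, ψ_p(x(t))} for all t ≥ 0, the safe set C = {x : h(x) ≥ 0} is asymptotically stable along x: (i) if h(x(0)) ≥ 0 then h(x(t)) ≥ 0 for all t ≥ 0, and (ii) min(h(x(t)), 0) → 0 as t → ∞. -/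
open scoped RealInnerProductSpace
open Set Filter Topology

/-!
Along the trajectory, `y = h ∘ x` satisfies `ẏ = ⟪∇h, ẋ⟫ ≥ -γ(y)`: the disturbance lies in the
convex hull of the `ψᵢ`, and a linear functional is minimised over a convex hull at one of the
generating points. For a level `c < 0` this gives `ẏ ≥ -γ(c) > 0` whenever `y ≤ c`, so `y` never
crosses `c` downwards and, growing at least linearly below it, reaches `c` in finite time.
Letting `c ↑ 0` yields both forward invariance and attractivity of `{h ≥ 0}`.
-/

theorem ConcaveOn.inf'_le_of_mem_convexHull_range {𝕜 E β ι : Type*} [Field 𝕜] [LinearOrder 𝕜]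
    [IsStrictOrderedRing 𝕜] [AddCommGroup E] [AddCommGroup β] [LinearOrder β]
    [IsOrderedAddMonoid β] [Module 𝕜 E] [Module 𝕜 β] [IsStrictOrderedModule 𝕜 β]
    [Fintype ι] {s : Set E} {f : E → β} {φ : ι → E} (hι : (Finset.univ : Finset ι).Nonempty)
    (hf : ConcaveOn 𝕜 s f) (hφs : range φ ⊆ s) {v : E} (hv : v ∈ convexHull 𝕜 (range φ)) :
    Finset.univ.inf' hι (f ∘ φ) ≤ f v := by
  obtain ⟨_, ⟨i, rfl⟩, hi⟩ := hf.exists_le_of_mem_convexHull hφs hv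
  exact (Finset.inf'_le _ (Finset.mem_univ i)).trans hi

theorem HasGradientAt.comp_hasDerivAt {F : Type*} [NormedAddCommGroup F] [InnerProductSpace ℝ F]
    [CompleteSpace F] {h : F → ℝ} {g : F} {x : ℝ → F} {x' : F} {t : ℝ}
    (hh : HasGradientAt h g (x t)) (hx : HasDerivAt x x' t) :
    HasDerivAt (h ∘ x) ⟪g, x'⟫ t := by
  simpa using hh.hasFDerivAt.comp_hasDerivAt t hx

theorem le_of_hasDerivAt_pos_of_eq {y y' : ℝ → ℝ} {a c : ℝ}
    (hy : ∀ t ∈ Ici a, HasDerivAt y (y' t) t) (hc : ∀ t ∈ Ici a, y t = c → 0 < y' t)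
    (ha : c ≤ y a) : ∀ t ∈ Ici a, c ≤ y t := fun _ ht =>
  image_le_of_deriv_right_lt_deriv_boundary' continuousOn_const
    (fun _ _ => hasDerivWithinAt_const _ _ c) ha
    (fun s hs => (hy s hs.1).continuousAt.continuousWithinAt)
    (fun s hs => (hy s hs.1).hasDerivWithinAt) (fun s hs hs' => hc s hs.1 hs'.symm)
    ⟨ht, le_rfl⟩

theorem exists_le_of_hasDerivAt_ge_of_le {y y' : ℝ → ℝ} {a c δ : ℝ} (hδ : 0 < δ)
    (hy : ∀ t ∈ Ici a, HasDerivAt y (y' t) t) (hc : ∀ t ∈ Ici a, y t ≤ c → δ ≤ y' t) :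
    ∃ t ∈ Ici a, c ≤ y t := by
  by_contra! hlt
  have hgrowth : ∀ t ∈ Ici a, δ * (t - a) ≤ y t - y a := by
    refine fun t ht => (convex_Ici a).mul_sub_le_image_sub_of_le_deriv
      (fun s hs => (hy s hs).continuousAt.continuousWithinAt)
      (fun s hs => (hy s (interior_subset hs)).differentiableAt.differentiableWithinAt)
      (fun s hs => ?_) a self_mem_Ici t ht ht
    rw [(hy s (interior_subset hs)).deriv]
    exact hc s (interior_subset hs) (hlt s (interior_subset hs)).le
  set T := a + (c - y a) / δ
  have hT : a ≤ T :=
    le_add_of_nonneg_right (div_nonneg (sub_nonneg.2 (hlt a self_mem_Ici).le) hδ.le)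
  have hreach : c ≤ y T := calc
    c = y a + δ * (T - a) := by simp only [T]; field_simp; ring
    _ ≤ y T := by linarith [hgrowth T hT]
  exact (hlt T hT).not_ge hreach

theorem nonneg_and_tendsto_min_zero_of_hasDerivAt_ge_neg {y y' γ : ℝ → ℝ} {a : ℝ}
    (hγ : StrictMono γ) (hγ0 : γ 0 = 0) (hy : ∀ t ∈ Ici a, HasDerivAt y (y' t) t)
    (hy' : ∀ t ∈ Ici a, -γ (y t) ≤ y' t) :
    (0 ≤ y a → ∀ t ∈ Ici a, 0 ≤ y t) ∧ Tendsto (fun t => min (y t) 0) atTop (𝓝 0) := by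
  have hγneg : ∀ c < 0, 0 < -γ c := fun c hc => neg_pos.2 (hγ0 ▸ hγ hc)
  have hdrift : ∀ c, ∀ t ∈ Ici a, y t ≤ c → -γ c ≤ y' t := fun c t ht hyt =>
    (neg_le_neg (hγ.monotone hyt)).trans (hy' t ht)
  have hlevel : ∀ c < 0, ∀ b ∈ Ici a, c ≤ y b → ∀ t ∈ Ici b, c ≤ y t := fun c hc b hb hyb =>
    le_of_hasDerivAt_pos_of_eq (fun t ht => hy t (Ici_subset_Ici.2 hb ht))
      (fun t ht hyt => (hγneg c hc).trans_le (hdrift c t (Ici_subset_Ici.2 hb ht) hyt.le)) hyb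
  refine ⟨fun h0 t ht => le_of_forall_lt_imp_le_of_dense fun c hc => hlevel c hc a self_mem_Ici
    (hc.le.trans h0) t ht, ?_⟩
  have hbelow : ∀ c < 0, ∀ᶠ t in atTop, c < min (y t) 0 := by
    intro c hc
    obtain ⟨c', hcc', hc'⟩ := exists_between hc
    obtain ⟨b, hb, hyb⟩ := exists_le_of_hasDerivAt_ge_of_le (hγneg c' hc') hy (hdrift c')
    filter_upwards [eventually_ge_atTop b] with t ht
    exact lt_min (hcc'.trans_le (hlevel c' hc' b hb hyb t ht)) hc
  exact tendsto_order.2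
    ⟨hbelow, fun c hc => Eventually.of_forall fun t => (min_le_right _ _).trans_lt hc⟩

theorem rcbf_asymptotic_stability_general {n m p : ℕ} (hp : 0 < p)
    (h : EuclideanSpace ℝ (Fin n) → ℝ) (hh : ContDiff ℝ 1 h)
    (f : EuclideanSpace ℝ (Fin n) → EuclideanSpace ℝ (Fin n))
    (u : EuclideanSpace ℝ (Fin n) → EuclideanSpace ℝ (Fin m))
    (g : EuclideanSpace ℝ (Fin n) → (EuclideanSpace ℝ (Fin m) →L[ℝ] EuclideanSpace ℝ (Fin n)))
    (ψ : Fin p → EuclideanSpace ℝ (Fin n) → EuclideanSpace ℝ (Fin n))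
    (γ : ℝ → ℝ)
    (hγmono : StrictMono γ) (hγ0 : γ 0 = 0)
    (hRCBF : ∀ x : EuclideanSpace ℝ (Fin n),
      ⟪gradient h x, f x + g x (u x)⟫ ≥
        -γ (h x) - Finset.univ.inf' ⟨⟨0, hp⟩, Finset.mem_univ _⟩
          (fun i : Fin p => ⟪gradient h x, ψ i x⟫))
    (x x' : ℝ → EuclideanSpace ℝ (Fin n))
    (hx : ∀ t ∈ Set.Ici (0 : ℝ), HasDerivAt x (x' t) t)
    (hincl : ∀ t ∈ Set.Ici (0 : ℝ),
      x' t - f (x t) - g (x t) (u (x t)) ∈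
        convexHull ℝ (Set.range fun i : Fin p => ψ i (x t))) :
    (h (x 0) ≥ 0 → ∀ t ∈ Set.Ici (0 : ℝ), h (x t) ≥ 0) ∧
    Filter.Tendsto (fun t : ℝ => min (h (x t)) 0) Filter.atTop (nhds 0) := by
  have hderiv (t : ℝ) (ht : t ∈ Ici 0) : HasDerivAt (h ∘ x) ⟪gradient h (x t), x' t⟫ t :=
    ((hh.differentiable one_ne_zero) (x t)).hasGradientAt.comp_hasDerivAt (hx t ht)
  have hbarrier (t : ℝ) (ht : t ∈ Ici 0) : -γ (h (x t)) ≤ ⟪gradient h (x t), x' t⟫ := by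
    have hRCBFt := hRCBF (x t)
    set w := gradient h (x t)
    have hdisturbance : Finset.univ.inf' ⟨⟨0, hp⟩, Finset.mem_univ _⟩ (fun i => ⟪w, ψ i (x t)⟫) ≤
        ⟪w, x' t - f (x t) - g (x t) (u (x t))⟫ :=
      ConcaveOn.inf'_le_of_mem_convexHull_range _ ((innerₛₗ ℝ w).concaveOn convex_univ)
        (subset_univ _) (hincl t ht)
    have hsplit : ⟪w, x' t⟫ = ⟪w, f (x t) + g (x t) (u (x t))⟫ +
        ⟪w, x' t - f (x t) - g (x t) (u (x t))⟫ := by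
      rw [← inner_add_right]
      abel_nf
    linarith
  exact nonneg_and_tendsto_min_zero_of_hasDerivAt_ge_neg hγmono hγ0 hderiv hbarrier

/-- **Asymptotic stability of the safe set under a robust control barrier function.**
Under the RCBF inequality, along every differentiable trajectory of the disturbed
system `ẋ ∈ f(x) + g(x)u(x) + co{ψ₁(x), …, ψ_p(x)}` on `[0, ∞)`:
(i) if `h(x(0)) ≥ 0` then `h(x(t)) ≥ 0` for all `t ≥ 0` (forward invariance), and
(ii) `min(h(x(t)), 0) → 0` as `t → ∞` (attractivity of the safe set). -/
theorem rcbf_asymptotic_stability {n m p : ℕ} (hp : 0 < p)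
    (h : EuclideanSpace ℝ (Fin n) → ℝ) (hh : ContDiff ℝ 1 h)
    (f : EuclideanSpace ℝ (Fin n) → EuclideanSpace ℝ (Fin n)) (hf : Continuous f)
    (u : EuclideanSpace ℝ (Fin n) → EuclideanSpace ℝ (Fin m)) (hu : Continuous u)
    (g : EuclideanSpace ℝ (Fin n) → (EuclideanSpace ℝ (Fin m) →L[ℝ] EuclideanSpace ℝ (Fin n)))
    (hg : Continuous g)
    (ψ : Fin p → EuclideanSpace ℝ (Fin n) → EuclideanSpace ℝ (Fin n))
    (hψ : ∀ i, Continuous (ψ i))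
    (γ : ℝ → ℝ) (hγlip : LocallyLipschitz γ) (hγcont : Continuous γ)
    (hγmono : StrictMono γ) (hγ0 : γ 0 = 0)
    (hRCBF : ∀ x : EuclideanSpace ℝ (Fin n),
      ⟪gradient h x, f x + g x (u x)⟫ ≥
        -γ (h x) - Finset.univ.inf' ⟨⟨0, hp⟩, Finset.mem_univ _⟩
          (fun i : Fin p => ⟪gradient h x, ψ i x⟫))
    (x x' : ℝ → EuclideanSpace ℝ (Fin n))
    (hx : ∀ t ∈ Set.Ici (0 : ℝ), HasDerivAt x (x' t) t)
    (hincl : ∀ t ∈ Set.Ici (0 : ℝ),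
      x' t - f (x t) - g (x t) (u (x t)) ∈
        convexHull ℝ (Set.range fun i : Fin p => ψ i (x t))) :
    (h (x 0) ≥ 0 → ∀ t ∈ Set.Ici (0 : ℝ), h (x t) ≥ 0) ∧
    Filter.Tendsto (fun t : ℝ => min (h (x t)) 0) Filter.atTop (nhds 0) :=
  rcbf_asymptotic_stability_general hp h hh f u g ψ γ hγmono hγ0 hRCBF x x' hx hincl
end

section
/- Let γ : ℝ → ℝ be a locally Lipschitz extended class-K function, and let v : [0, t₁] → ℝ be differentiable with v′(t) ≥ -γ(v(t)) for all t ∈ [0, t₁]. If v(0) ≥ 0, then v(t) ≥ 0 for all t ∈ [0, t₁]. -/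
/-- **Scalar comparison lemma for barrier functions.** If `γ` is a locally Lipschitz
extended class-K function (continuous, strictly increasing, `γ(0) = 0`) and
`v : [0, t₁] → ℝ` is differentiable with `v′(t) ≥ -γ(v(t))`, then `v(0) ≥ 0`
implies `v(t) ≥ 0` for all `t ∈ [0, t₁]`. -/
theorem scalar_comparison_nonneg (γ : ℝ → ℝ)
    (hγlip : LocallyLipschitz γ) (hγcont : Continuous γ)
    (hγmono : StrictMono γ) (hγ0 : γ 0 = 0)
    (t₁ : ℝ) (v v' : ℝ → ℝ)
    (hv : ∀ t ∈ Set.Icc (0 : ℝ) t₁, HasDerivAt v (v' t) t)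
    (hineq : ∀ t ∈ Set.Icc (0 : ℝ) t₁, v' t ≥ -γ (v t))
    (h0 : v 0 ≥ 0) :
    ∀ t ∈ Set.Icc (0 : ℝ) t₁, v t ≥ 0 := by
  intro t ht
  by_contra hlt
  push_neg at hlt
  have ht0 : 0 ≤ t := ht.1
  have hcont : ContinuousOn v (Set.Icc 0 t₁) := fun x hx =>
    (hv x hx).continuousAt.continuousWithinAt
  have hsub : Set.Icc (0:ℝ) t ⊆ Set.Icc 0 t₁ := Set.Icc_subset_Icc le_rfl ht.2
  set S := Set.Icc (0:ℝ) t ∩ v ⁻¹' Set.Ici 0 with hS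
  have hSne : S.Nonempty := ⟨0, ⟨le_rfl, ht0⟩, h0⟩
  have hSclosed : IsClosed S :=
    (hcont.mono hsub).preimage_isClosed_of_isClosed isClosed_Icc isClosed_Ici
  have hSbdd : BddAbove S := ⟨t, fun x hx => hx.1.2⟩
  set s := sSup S with hs
  have hsS : s ∈ S := hSclosed.csSup_mem hSne hSbdd
  have hst : s ≤ t := hsS.1.2
  have hs0 : 0 ≤ s := hsS.1.1
  have hvs : 0 ≤ v s := hsS.2
  have hmono : MonotoneOn v (Set.Icc s t) := by
    apply monotoneOn_of_deriv_nonneg (convex_Icc s t)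
      (hcont.mono (Set.Icc_subset_Icc hs0 ht.2))
    · intro x hx
      rw [interior_Icc] at hx
      exact ((hv x ⟨hs0.trans hx.1.le, hx.2.le.trans ht.2⟩).differentiableAt).differentiableWithinAt
    · intro x hx
      rw [interior_Icc] at hx
      have hx' : x ∈ Set.Icc (0:ℝ) t₁ := ⟨hs0.trans hx.1.le, hx.2.le.trans ht.2⟩
      rw [(hv x hx').deriv]
      have hvx : v x < 0 := by
        by_contra hge
        push_neg at hge
        have hxS : x ∈ S := ⟨⟨hs0.trans hx.1.le, hx.2.le⟩, hge⟩
        exact absurd (le_csSup hSbdd hxS) (not_le.2 hx.1)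
      have hneg : γ (v x) < 0 := hγ0 ▸ hγmono hvx
      linarith [hineq x hx']
  have := hmono ⟨le_rfl, hst⟩ ⟨hst, le_rfl⟩ hst
  linarith
end

section
/- Let γ : ℝ → ℝ be a locally Lipschitz extended class-K function, and let v : [0, ∞) → ℝ be differentiable with v′(t) ≥ -γ(v(t)) for all t ≥ 0. Then min(v(t), 0) → 0 as t → ∞. -/
/-!
Fix a level `a < 0`, so that `γ a < 0`. At any time with `v = a` the derivative is at least
`-γ a > 0`, so `v` cannot cross the level `a` downwards and `{v ≥ a}` is forward invariant.
As long as `v < a`, monotonicity of `γ` gives `v' ≥ -γ a > 0`, so `v` grows at least linearly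
and must reach the level `a` in finite time. Hence `v ≥ a` eventually, for every `a < 0`.
-/

open Set Filter

variable {v v' : ℝ → ℝ} {t₀ a : ℝ}

theorem le_of_deriv_pos_at_level (hv : ∀ t ∈ Ici t₀, HasDerivAt v (v' t) t)
    (hpos : ∀ t ∈ Ici t₀, v t = a → 0 < v' t) (h₀ : a ≤ v t₀) :
    ∀ t ∈ Ici t₀, a ≤ v t := by
  intro t ht
  have hIcc : Icc t₀ t ⊆ Ici t₀ := Icc_subset_Ici_self
  have hIco : Ico t₀ t ⊆ Ici t₀ := Ico_subset_Ici_self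
  have fence := image_le_of_deriv_right_lt_deriv_boundary
    (f := fun s => -v s) (f' := fun s => -v' s) (B := fun _ => -a) (B' := fun _ => 0)
    (fun s hs => (hv s (hIcc hs)).continuousAt.neg.continuousWithinAt)
    (fun s hs => (hv s (hIco hs)).neg.hasDerivWithinAt) (neg_le_neg h₀)
    (fun _ => hasDerivAt_const _ _)
    (fun s hs hs_eq => neg_neg_of_pos (hpos s (hIco hs) (neg_inj.mp hs_eq)))
  exact neg_le_neg_iff.mp (fence ⟨ht, le_rfl⟩)

theorem tendsto_atTop_of_le_deriv {c : ℝ} (hc : 0 < c)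
    (hv : ∀ t ∈ Ici t₀, HasDerivAt v (v' t) t) (hle : ∀ t ∈ Ici t₀, c ≤ v' t) :
    Tendsto v atTop atTop := by
  have hint : ∀ t ∈ interior (Ici t₀), t ∈ Ici t₀ := fun t ht => interior_subset ht
  have growth : ∀ t ∈ Ici t₀, c * (t - t₀) ≤ v t - v t₀ :=
    fun t ht => (convex_Ici t₀).mul_sub_le_image_sub_of_le_deriv
      (fun s hs => (hv s hs).continuousAt.continuousWithinAt)
      (fun s hs => (hv s (hint s hs)).differentiableAt.differentiableWithinAt)
      (fun s hs => (hv s (hint s hs)).deriv ▸ hle s (hint s hs)) t₀ self_mem_Ici t ht ht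
  have hlin : Tendsto (fun t => v t₀ + c * (t - t₀)) atTop atTop :=
    tendsto_atTop_add_const_left _ _
      ((tendsto_atTop_add_const_right _ _ tendsto_id).const_mul_atTop hc)
  refine tendsto_atTop_mono' atTop ?_ hlin
  filter_upwards [eventually_ge_atTop t₀] with t ht
  linarith [growth t ht]

theorem exists_le_of_le_deriv_below_level {c : ℝ} (hc : 0 < c)
    (hv : ∀ t ∈ Ici t₀, HasDerivAt v (v' t) t)
    (hle : ∀ t ∈ Ici t₀, v t < a → c ≤ v' t) :
    ∃ t ∈ Ici t₀, a ≤ v t := by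
  by_contra! hbelow
  have hunbdd := tendsto_atTop_of_le_deriv hc hv fun t ht => hle t ht (hbelow t ht)
  obtain ⟨t, ht, hvt⟩ := ((hunbdd.eventually_ge_atTop a).and (eventually_ge_atTop t₀)).exists
  exact (hbelow t hvt).not_ge ht

theorem eventually_le_of_deriv_ge_neg_comp {γ : ℝ → ℝ} (hγ : Monotone γ) (ha : γ a < 0)
    (hv : ∀ t ∈ Ici t₀, HasDerivAt v (v' t) t)
    (hineq : ∀ t ∈ Ici t₀, v' t ≥ -γ (v t)) :
    ∀ᶠ t in atTop, a ≤ v t := by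
  obtain ⟨T, hT, hvT⟩ := exists_le_of_le_deriv_below_level (neg_pos.mpr ha) hv
    fun t ht hlt => (neg_le_neg (hγ hlt.le)).trans (hineq t ht)
  have hsub : Ici T ⊆ Ici t₀ := Ici_subset_Ici.mpr hT
  have hpos : ∀ t ∈ Ici T, v t = a → 0 < v' t := fun t ht heq =>
    (neg_pos.mpr (heq ▸ ha)).trans_le (hineq t (hsub ht))
  filter_upwards [eventually_ge_atTop T] with t ht
  exact le_of_deriv_pos_at_level (fun t ht => hv t (hsub ht)) hpos hvT t ht

theorem scalar_attractivity_general (γ : ℝ → ℝ)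
    (hγmono : StrictMono γ) (hγ0 : γ 0 = 0)
    (v v' : ℝ → ℝ)
    (hv : ∀ t ∈ Set.Ici (0 : ℝ), HasDerivAt v (v' t) t)
    (hineq : ∀ t ∈ Set.Ici (0 : ℝ), v' t ≥ -γ (v t)) :
    Filter.Tendsto (fun t : ℝ => min (v t) 0) Filter.atTop (nhds 0) := by
  refine tendsto_order.2
    ⟨fun b hb => ?_, fun b hb => .of_forall fun t => (min_le_right _ _).trans_lt hb⟩
  obtain ⟨a, hba, ha⟩ := exists_between hb
  have hγa : γ a < 0 := hγ0 ▸ hγmono ha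
  filter_upwards [eventually_le_of_deriv_ge_neg_comp hγmono.monotone hγa hv hineq] with t hat
  exact lt_min (hba.trans_le hat) hb

/-- **Attractivity of the nonnegative region (scalar comparison).** If `γ` is a
locally Lipschitz extended class-K function (continuous, strictly increasing,
`γ(0) = 0`) and `v : [0, ∞) → ℝ` is differentiable with `v′(t) ≥ -γ(v(t))` for all
`t ≥ 0`, then `min(v(t), 0) → 0` as `t → ∞`. -/
theorem scalar_attractivity (γ : ℝ → ℝ)
    (hγlip : LocallyLipschitz γ) (hγcont : Continuous γ)
    (hγmono : StrictMono γ) (hγ0 : γ 0 = 0)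
    (v v' : ℝ → ℝ)
    (hv : ∀ t ∈ Set.Ici (0 : ℝ), HasDerivAt v (v' t) t)
    (hineq : ∀ t ∈ Set.Ici (0 : ℝ), v' t ≥ -γ (v t)) :
    Filter.Tendsto (fun t : ℝ => min (v t) 0) Filter.atTop (nhds 0) :=
  scalar_attractivity_general γ hγmono hγ0 v v' hv hineq
end

section
/- Let h : ℝⁿ → ℝ be continuously differentiable, let ψ₁, …, ψ_p : ℝⁿ → ℝⁿ (p ≥ 1) be continuous, let γ : ℝ → ℝ be an extended class-K function, let f : ℝⁿ → ℝⁿ, u : ℝⁿ → ℝᵐ, g : ℝⁿ → (ℝᵐ →L ℝⁿ) be continuous, and suppose that for all x ∈ ℝⁿ, ⟪∇h(x), f(x) + g(x)(u(x))⟫ ≥ -γ(h(x)) - min_{1 ≤ i ≤ p} ⟪∇h(x), ψᵢ(x)⟫. Then for every differentiable curve x : [0, ∞) → ℝⁿ satisfying x′(t) - f(x(t)) - g(x(t))(u(x(t))) ∈ convexHull{ψ₁(x(t)), …, ψ_p(x(t))} for all t ≥ 0, and at every time t with h(x(t)) < 0, the function t ↦ h(x(t)) has strictly positive derivative at t. 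-/
open scoped RealInnerProductSpace

/-!
Along the trajectory, `d/dt h(x(t)) = ⟪∇h, f + g u⟫ + ⟪∇h, w⟫` with `w` in the convex hull of the
`ψᵢ`. The concave (linear) functional `⟪∇h, ·⟫` attains its minimum over that hull at some `ψᵢ`, so
`⟪∇h, w⟫ ≥ minᵢ ⟪∇h, ψᵢ⟫`, and the RCBF inequality gives `d/dt h(x(t)) ≥ -γ(h(x(t)))`, which is
positive when `h(x(t)) < 0`.
-/

section

variable {E : Type*} [NormedAddCommGroup E] [InnerProductSpace ℝ E]

theorem HasGradientAt.hasDerivAt_comp [CompleteSpace E] {φ : E → ℝ} {φ' : E} {γ : ℝ → E}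
    {γ' : E} {t : ℝ} (hφ : HasGradientAt φ φ' (γ t)) (hγ : HasDerivAt γ γ' t) :
    HasDerivAt (fun s => φ (γ s)) ⟪φ', γ'⟫ t :=
  hφ.hasFDerivAt.comp_hasDerivAt t hγ

theorem inf'_inner_le_inner_of_mem_convexHull {ι : Type*} [Fintype ι]
    (hι : (Finset.univ : Finset ι).Nonempty) (v : E) {ψ : ι → E} {w : E}
    (hw : w ∈ convexHull ℝ (Set.range ψ)) :
    Finset.univ.inf' hι (fun i => ⟪v, ψ i⟫) ≤ ⟪v, w⟫ := by
  obtain ⟨_, ⟨i, rfl⟩, hle⟩ :=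
    ((innerₛₗ ℝ v).concaveOn convex_univ).exists_le_of_mem_convexHull (Set.subset_univ _) hw
  exact (Finset.inf'_le _ (Finset.mem_univ i)).trans hle

end

theorem rcbf_strict_increase_outside_safe_set_general {n m p : ℕ} (hp : 0 < p)
    (h : EuclideanSpace ℝ (Fin n) → ℝ) (hh : ContDiff ℝ 1 h)
    (ψ : Fin p → EuclideanSpace ℝ (Fin n) → EuclideanSpace ℝ (Fin n))
    (γ : ℝ → ℝ) (hγmono : StrictMono γ) (hγ0 : γ 0 = 0)
    (f : EuclideanSpace ℝ (Fin n) → EuclideanSpace ℝ (Fin n))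
    (u : EuclideanSpace ℝ (Fin n) → EuclideanSpace ℝ (Fin m))
    (g : EuclideanSpace ℝ (Fin n) → (EuclideanSpace ℝ (Fin m) →L[ℝ] EuclideanSpace ℝ (Fin n)))
    (hRCBF : ∀ x : EuclideanSpace ℝ (Fin n),
      ⟪gradient h x, f x + g x (u x)⟫ ≥
        -γ (h x) - Finset.univ.inf' ⟨⟨0, hp⟩, Finset.mem_univ _⟩
          (fun i : Fin p => ⟪gradient h x, ψ i x⟫))
    (x x' : ℝ → EuclideanSpace ℝ (Fin n))
    (hx : ∀ t ∈ Set.Ici (0 : ℝ), HasDerivAt x (x' t) t)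
    (hincl : ∀ t ∈ Set.Ici (0 : ℝ),
      x' t - f (x t) - g (x t) (u (x t)) ∈
        convexHull ℝ (Set.range fun i : Fin p => ψ i (x t))) :
    ∀ t ∈ Set.Ici (0 : ℝ), h (x t) < 0 →
      ∃ d : ℝ, 0 < d ∧ HasDerivAt (fun s : ℝ => h (x s)) d t := by
  intro t ht hneg
  set v := gradient h (x t)
  have hderiv : HasDerivAt (fun s => h (x s)) ⟪v, x' t⟫ t :=
    ((hh.differentiable one_ne_zero (x t)).hasGradientAt).hasDerivAt_comp (hx t ht)
  have hdisturbance := inf'_inner_le_inner_of_mem_convexHull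
    ⟨⟨0, hp⟩, Finset.mem_univ _⟩ v (hincl t ht)
  have hγneg : γ (h (x t)) < 0 := hγ0 ▸ hγmono hneg
  have hsplit : ⟪v, x' t⟫ =
      ⟪v, f (x t) + g (x t) (u (x t))⟫ + ⟪v, x' t - f (x t) - g (x t) (u (x t))⟫ := by
    rw [← inner_add_right]
    congr 1
    abel
  refine ⟨_, ?_, hderiv⟩
  linarith [hRCBF (x t)]

/-- **Strict increase of the barrier value along disturbed trajectories outside the
safe set.** Under the RCBF inequality, for every differentiable trajectory of
`ẋ ∈ f(x) + g(x)u(x) + co{ψ₁(x), …, ψ_p(x)}` on `[0, ∞)` and every time `t ≥ 0`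
with `h(x(t)) < 0`, the function `t ↦ h(x(t))` has a strictly positive derivative
at `t`. -/
theorem rcbf_strict_increase_outside_safe_set {n m p : ℕ} (hp : 0 < p)
    (h : EuclideanSpace ℝ (Fin n) → ℝ) (hh : ContDiff ℝ 1 h)
    (ψ : Fin p → EuclideanSpace ℝ (Fin n) → EuclideanSpace ℝ (Fin n))
    (hψ : ∀ i, Continuous (ψ i))
    (γ : ℝ → ℝ) (hγcont : Continuous γ) (hγmono : StrictMono γ) (hγ0 : γ 0 = 0)
    (f : EuclideanSpace ℝ (Fin n) → EuclideanSpace ℝ (Fin n)) (hf : Continuous f)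
    (u : EuclideanSpace ℝ (Fin n) → EuclideanSpace ℝ (Fin m)) (hu : Continuous u)
    (g : EuclideanSpace ℝ (Fin n) → (EuclideanSpace ℝ (Fin m) →L[ℝ] EuclideanSpace ℝ (Fin n)))
    (hg : Continuous g)
    (hRCBF : ∀ x : EuclideanSpace ℝ (Fin n),
      ⟪gradient h x, f x + g x (u x)⟫ ≥
        -γ (h x) - Finset.univ.inf' ⟨⟨0, hp⟩, Finset.mem_univ _⟩
          (fun i : Fin p => ⟪gradient h x, ψ i x⟫))
    (x x' : ℝ → EuclideanSpace ℝ (Fin n))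
    (hx : ∀ t ∈ Set.Ici (0 : ℝ), HasDerivAt x (x' t) t)
    (hincl : ∀ t ∈ Set.Ici (0 : ℝ),
      x' t - f (x t) - g (x t) (u (x t)) ∈
        convexHull ℝ (Set.range fun i : Fin p => ψ i (x t))) :
    ∀ t ∈ Set.Ici (0 : ℝ), h (x t) < 0 →
      ∃ d : ℝ, 0 < d ∧ HasDerivAt (fun s : ℝ => h (x s)) d t :=
  rcbf_strict_increase_outside_safe_set_general hp h hh ψ γ hγmono hγ0 f u g hRCBF x x' hx hincl
end
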